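/- arXiv:1407.2224 — 4 statements merged into one kernel-verified Lean document; each statement's English description precedes it below -/
import Mathlib

section
/- The two smeared Pauli measurements A_x^λ(±) = (1/2)(I ± λσ_x) and A_z^λ(±) = (1/2)(I ± λσ_z) are NOT jointly measurable when λ > 1/√2. -/
/-!
Let `G i j` be a joint observable. Its marginals force
`G₊₊ - G₋₋ = (λ/2)(σx + σz)` and `G₊₋ - G₋₊ = (λ/2)(σx - σz)`. For a positive semidefinite `M`
and a Hermitian involution `N` one has `Re tr (M N) ≤ tr M`, because `1 - N = ½ (1 - N)(1 - N)ᴴ`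
is positive semidefinite. Testing the two differences against the involutions `(σx ± σz)/√2`
gives `2√2 λ ≤ tr (∑ G) = tr 1 = 2`, i.e. `λ ≤ 1/√2`.
-/

open Matrix ComplexOrder

noncomputable def σx : Matrix (Fin 2) (Fin 2) ℂ := !![0, 1; 1, 0]
noncomputable def σz : Matrix (Fin 2) (Fin 2) ℂ := !![1, 0; 0, -1]

/-- Sign associated to a boolean outcome. -/
def sgn (b : Bool) : ℝ := if b then 1 else -1

/-- The smeared Pauli observable `(1/2)(I + sgn(b)·l·σ)`. -/
noncomputable def smeared (σ : Matrix (Fin 2) (Fin 2) ℂ) (l : ℝ) (b : Bool) :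
    Matrix (Fin 2) (Fin 2) ℂ :=
  (1 / 2 : ℂ) • ((1 : Matrix (Fin 2) (Fin 2) ℂ) + ((sgn b * l : ℝ) : ℂ) • σ)

namespace Matrix.PosSemidef

variable {n : Type*} [Fintype n] [DecidableEq n] {M N : Matrix n n ℂ}

lemma re_trace_mul_le_of_involutive (hM : M.PosSemidef) (hN : N.IsHermitian)
    (hNN : N * N = 1) : (M * N).trace.re ≤ M.trace.re := by
  have hsq : (1 - N) * (1 - N)ᴴ = (2 : ℂ) • (1 - N) := by
    rw [conjTranspose_sub, conjTranspose_one, hN.eq]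
    calc (1 - N) * (1 - N) = 1 - 2 • N + N * N := by noncomm_ring
      _ = (2 : ℂ) • (1 - N) := by rw [hNN]; module
  have hnonneg := (hM.conjTranspose_mul_mul_same (1 - N)).trace_nonneg
  rw [mul_assoc, trace_mul_comm, mul_assoc, hsq, mul_smul_comm, trace_smul, mul_sub,
    mul_one, trace_sub] at hnonneg
  have hre := (Complex.nonneg_iff.mp hnonneg).1
  simp only [smul_eq_mul, Complex.mul_re, Complex.sub_re, Complex.sub_im] at hre
  norm_num at hre
  linarith

lemma re_trace_sub_mul_le_of_involutive {A B : Matrix n n ℂ} (hA : A.PosSemidef)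
    (hB : B.PosSemidef) (hN : N.IsHermitian) (hNN : N * N = 1) :
    ((A - B) * N).trace.re ≤ A.trace.re + B.trace.re := by
  have hAN := hA.re_trace_mul_le_of_involutive hN hNN
  have hBN := hB.re_trace_mul_le_of_involutive hN.neg (by rwa [neg_mul_neg])
  rw [mul_neg, trace_neg, Complex.neg_re] at hBN
  rw [sub_mul, trace_sub, Complex.sub_re]
  linarith

end Matrix.PosSemidef

noncomputable def pauliXZ (a b : ℝ) : Matrix (Fin 2) (Fin 2) ℂ := (a : ℂ) • σx + (b : ℂ) • σz

lemma isHermitian_pauliXZ (a b : ℝ) : (pauliXZ a b).IsHermitian := by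
  ext i j
  fin_cases i <;> fin_cases j <;> simp [pauliXZ, σx, σz]

lemma pauliXZ_mul_self {a b : ℝ} (h : a ^ 2 + b ^ 2 = 1) : pauliXZ a b * pauliXZ a b = 1 := by
  have h' : (a : ℂ) ^ 2 + (b : ℂ) ^ 2 = 1 := by exact_mod_cast h
  ext i j
  fin_cases i <;> fin_cases j <;> simp [pauliXZ, σx, σz, mul_apply, Fin.sum_univ_two]
  · linear_combination h'
  · ring
  · ring
  · linear_combination h'

lemma re_trace_pauliXZ_mul_pauliXZ (a b a' b' : ℝ) :
    (pauliXZ a b * pauliXZ a' b').trace.re = 2 * (a * a' + b * b') := by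
  simp [pauliXZ, σx, σz, trace_fin_two]
  ring

lemma smeared_σx_true_sub_smeared_σz_false (l : ℝ) :
    smeared σx l true - smeared σz l false = pauliXZ (l / 2) (l / 2) := by
  simp only [smeared, sgn, pauliXZ]
  push_cast
  module

lemma smeared_σx_true_sub_smeared_σz_true (l : ℝ) :
    smeared σx l true - smeared σz l true = pauliXZ (l / 2) (-(l / 2)) := by
  simp only [smeared, sgn, pauliXZ]
  push_cast
  module

theorem stmt_3 (l : ℝ) (hl : 1 / Real.sqrt 2 < l) :
    ¬ ∃ G : Bool → Bool → Matrix (Fin 2) (Fin 2) ℂ,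
        (∀ i j, (G i j).PosSemidef) ∧
        (∑ i : Bool, ∑ j : Bool, G i j = 1) ∧
        (∀ i, ∑ j : Bool, G i j = smeared σx l i) ∧
        (∀ j, ∑ i : Bool, G i j = smeared σz l j) := by
  rintro ⟨G, hG, hsum, hx, hz⟩
  simp only [Fintype.sum_bool] at hsum hx hz
  set c := 1 / Real.sqrt 2 with hc_def
  have hc : c ^ 2 + c ^ 2 = 1 := by
    rw [hc_def, div_pow, Real.sq_sqrt zero_le_two]; norm_num
  have hc' : c ^ 2 + (-c) ^ 2 = 1 := by rwa [neg_sq]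
  have hdiag : G true true - G false false = pauliXZ (l / 2) (l / 2) := by
    rw [← smeared_σx_true_sub_smeared_σz_false, ← hx true, ← hz false]; abel
  have hoff : G true false - G false true = pauliXZ (l / 2) (-(l / 2)) := by
    rw [← smeared_σx_true_sub_smeared_σz_true, ← hx true, ← hz true]; abel
  have h₁ := (hG true true).re_trace_sub_mul_le_of_involutive (hG false false)
    (isHermitian_pauliXZ c c) (pauliXZ_mul_self hc)
  have h₂ := (hG true false).re_trace_sub_mul_le_of_involutive (hG false true)
    (isHermitian_pauliXZ c (-c)) (pauliXZ_mul_self hc')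
  rw [hdiag, re_trace_pauliXZ_mul_pauliXZ] at h₁
  rw [hoff, re_trace_pauliXZ_mul_pauliXZ] at h₂
  have htr : (G true true).trace.re + (G true false).trace.re +
      ((G false true).trace.re + (G false false).trace.re) = 2 := by
    simpa [trace_add] using congrArg (fun A => A.trace.re) hsum
  have hc_pos : 0 < c := by positivity
  nlinarith [mul_lt_mul_of_pos_left hl hc_pos]
end

section
/- The three smeared Pauli measurements A_k^λ(±) = (1/2)(I ± λσ_k), k ∈ {x,y,z}, are jointly measurable if and only if λ ≤ 1/√3. -/
/-!
Every matrix `r • 1 + a • σx + b • σy + c • σz` with `a² + b² + c² ≤ r²` is positive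
semidefinite: in the case of equality it is Hermitian and squares to `2r` times itself, so it is
a nonnegative multiple of its Gram matrix.

If `l ≤ 1/√3`, the operators `(1/8)(1 + l(±σx ± σy ± σz))` are therefore positive and have the
smeared Pauli observables as marginals. Conversely, pair each `G i j k` with the positive operator
`√3 • 1 - (±σx ± σy ± σz)` of matching signs: the traces of the products are nonnegative, and
by the marginal conditions they sum to `tr ((√3 - 3l) • 1)`, so `3l ≤ √3`.
-/

open Matrix ComplexOrder

noncomputable def σy : Matrix (Fin 2) (Fin 2) ℂ := !![0, -Complex.I; Complex.I, 0]
theorem Matrix.PosSemidef.trace_mul_nonneg {n 𝕜 : Type*} [Fintype n] [RCLike 𝕜]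
    {A B : Matrix n n 𝕜} (hA : A.PosSemidef) (hB : B.PosSemidef) : 0 ≤ (A * B).trace := by
  obtain ⟨m, v, rfl⟩ := posSemidef_iff_eq_sum_vecMulVec.mp hB
  rw [Matrix.mul_sum, trace_sum]
  refine Finset.sum_nonneg fun i _ => ?_
  rw [mul_vecMulVec, trace_vecMulVec, dotProduct_comm]
  exact hA.dotProduct_mulVec_nonneg (v i)

lemma sgn_sq (b : Bool) : sgn b ^ 2 = 1 := by
  cases b <;> norm_num [sgn]

lemma σx_mul_self : σx * σx = 1 := by
  ext p q; fin_cases p <;> fin_cases q <;> simp [σx, mul_apply, Fin.sum_univ_two]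

lemma σy_mul_self : σy * σy = 1 := by
  ext p q; fin_cases p <;> fin_cases q <;> simp [σy, mul_apply, Fin.sum_univ_two]

lemma σz_mul_self : σz * σz = 1 := by
  ext p q; fin_cases p <;> fin_cases q <;> simp [σz, mul_apply, Fin.sum_univ_two]

noncomputable def pauliDot (a b c : ℝ) : Matrix (Fin 2) (Fin 2) ℂ :=
  (a : ℂ) • σx + (b : ℂ) • σy + (c : ℂ) • σz

lemma pauliDot_mul_self (a b c : ℝ) :
    pauliDot a b c * pauliDot a b c = ((a ^ 2 + b ^ 2 + c ^ 2 : ℝ) : ℂ) • 1 := by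
  ext p q
  fin_cases p <;> fin_cases q <;>
    simp [pauliDot, σx, σy, σz, mul_apply, Fin.sum_univ_two] <;> ring_nf <;> simp [Complex.I_sq]

lemma isHermitian_pauliDot (a b c : ℝ) : (pauliDot a b c).IsHermitian := by
  ext p q
  fin_cases p <;> fin_cases q <;> simp [pauliDot, σx, σy, σz]

lemma posSemidef_smul_one_add_pauliDot_of_eq {r a b c : ℝ} (hr : 0 ≤ r)
    (h : a ^ 2 + b ^ 2 + c ^ 2 = r ^ 2) : ((r : ℂ) • 1 + pauliDot a b c).PosSemidef := by
  rcases hr.eq_or_lt with rfl | hr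
  · obtain ⟨rfl, rfl, rfl⟩ : a = 0 ∧ b = 0 ∧ c = 0 := by
      refine ⟨?_, ?_, ?_⟩ <;> nlinarith [sq_nonneg a, sq_nonneg b, sq_nonneg c]
    simp [pauliDot, PosSemidef.zero]
  set N := (r : ℂ) • 1 + pauliDot a b c
  have hN : Nᴴ = N := by
    simp [N, conjTranspose_add, conjTranspose_smul, (isHermitian_pauliDot a b c).eq]
  have hsq : Nᴴ * N = ((2 * r : ℝ) : ℂ) • N := by
    rw [hN]
    simp only [N, add_mul, mul_add, smul_one_mul, mul_smul_one, pauliDot_mul_self, h]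
    push_cast
    module
  have hN_eq : N = (((2 * r)⁻¹ : ℝ) : ℂ) • (Nᴴ * N) := by
    rw [hsq, smul_smul, ← Complex.ofReal_mul, inv_mul_cancel₀ (by positivity), Complex.ofReal_one,
      one_smul]
  rw [hN_eq]
  exact (posSemidef_conjTranspose_mul_self N).smul (Complex.zero_le_real.mpr (by positivity))

lemma posSemidef_smul_one_add_pauliDot {r a b c : ℝ} (hr : 0 ≤ r)
    (h : a ^ 2 + b ^ 2 + c ^ 2 ≤ r ^ 2) : ((r : ℂ) • 1 + pauliDot a b c).PosSemidef := by
  set t := √(a ^ 2 + b ^ 2 + c ^ 2)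
  have ht : t ≤ r := (Real.sqrt_le_left hr).mpr h
  have hsplit : (r : ℂ) • 1 + pauliDot a b c
      = ((r - t : ℝ) : ℂ) • 1 + ((t : ℂ) • 1 + pauliDot a b c) := by
    push_cast
    module
  rw [hsplit]
  exact (PosSemidef.one.smul (Complex.zero_le_real.mpr (sub_nonneg.mpr ht))).add
    (posSemidef_smul_one_add_pauliDot_of_eq (Real.sqrt_nonneg _)
      (Real.sq_sqrt (by positivity)).symm)

lemma sum_sgn_smul_smeared (σ : Matrix (Fin 2) (Fin 2) ℂ) (l : ℝ) :
    ∑ b, (sgn b : ℂ) • smeared σ l b = (l : ℂ) • σ := by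
  simp [smeared, sgn]
  module

noncomputable def testOp (r : ℝ) (i j k : Bool) : Matrix (Fin 2) (Fin 2) ℂ :=
  (r : ℂ) • 1 + pauliDot (-sgn i) (-sgn j) (-sgn k)

lemma sum_mul_testOp {l : ℝ} {G : Bool → Bool → Bool → Matrix (Fin 2) (Fin 2) ℂ} (r : ℝ)
    (hsum : ∑ i : Bool, ∑ j : Bool, ∑ k : Bool, G i j k = 1)
    (hx : ∀ i, ∑ j : Bool, ∑ k : Bool, G i j k = smeared σx l i)
    (hy : ∀ j, ∑ i : Bool, ∑ k : Bool, G i j k = smeared σy l j)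
    (hz : ∀ k, ∑ i : Bool, ∑ j : Bool, G i j k = smeared σz l k) :
    ∑ i, ∑ j, ∑ k, G i j k * testOp r i j k = ((r - 3 * l : ℝ) : ℂ) • 1 := by
  have hmx : ∑ i, ∑ j, ∑ k, (sgn i : ℂ) • G i j k = (l : ℂ) • σx := by
    simp_rw [← Finset.smul_sum, hx]
    exact sum_sgn_smul_smeared σx l
  have hmy : ∑ i, ∑ j, ∑ k, (sgn j : ℂ) • G i j k = (l : ℂ) • σy := by
    rw [Finset.sum_comm]
    simp_rw [← Finset.smul_sum, hy]
    exact sum_sgn_smul_smeared σy l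
  have hmz : ∑ i, ∑ j, ∑ k, (sgn k : ℂ) • G i j k = (l : ℂ) • σz := by
    rw [Finset.sum_congr rfl fun i _ => Finset.sum_comm, Finset.sum_comm]
    simp_rw [← Finset.smul_sum, hz]
    exact sum_sgn_smul_smeared σz l
  have hexpand i j k : G i j k * testOp r i j k = (r : ℂ) • G i j k
      - ((sgn i : ℂ) • G i j k) * σx - ((sgn j : ℂ) • G i j k) * σy
      - ((sgn k : ℂ) • G i j k) * σz := by
    simp only [testOp, pauliDot, mul_add, Matrix.mul_smul, Matrix.smul_mul, mul_one]
    push_cast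
    module
  simp only [hexpand, Finset.sum_sub_distrib, ← Finset.sum_mul]
  rw [hmx, hmy, hmz]
  simp only [← Finset.smul_sum, hsum, Matrix.smul_mul, σx_mul_self, σy_mul_self, σz_mul_self]
  push_cast
  module

lemma le_one_div_sqrt_three_of_joint {l : ℝ} {G : Bool → Bool → Bool → Matrix (Fin 2) (Fin 2) ℂ}
    (hG : ∀ i j k, (G i j k).PosSemidef)
    (hsum : ∑ i : Bool, ∑ j : Bool, ∑ k : Bool, G i j k = 1)
    (hx : ∀ i, ∑ j : Bool, ∑ k : Bool, G i j k = smeared σx l i)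
    (hy : ∀ j, ∑ i : Bool, ∑ k : Bool, G i j k = smeared σy l j)
    (hz : ∀ k, ∑ i : Bool, ∑ j : Bool, G i j k = smeared σz l k) :
    l ≤ 1 / √3 := by
  have htest i j k : (testOp √3 i j k).PosSemidef :=
    posSemidef_smul_one_add_pauliDot (Real.sqrt_nonneg 3) (by norm_num [neg_sq, sgn_sq])
  have htrace : 0 ≤ (∑ i, ∑ j, ∑ k, G i j k * testOp √3 i j k).trace := by
    simp only [trace_sum]
    exact Finset.sum_nonneg fun i _ => Finset.sum_nonneg fun j _ => Finset.sum_nonneg fun k _ =>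
      (hG i j k).trace_mul_nonneg (htest i j k)
  rw [sum_mul_testOp √3 hsum hx hy hz, trace_smul, trace_one, Fintype.card_fin, smul_eq_mul,
    ← Complex.ofReal_natCast, ← Complex.ofReal_mul, Complex.zero_le_real] at htrace
  have h3l : 3 * l ≤ √3 := by push_cast at htrace; linarith
  have hs : √3 * √3 = 3 := Real.mul_self_sqrt (by norm_num)
  rw [le_div_iff₀ (by positivity)]
  nlinarith [mul_nonneg (sub_nonneg.mpr h3l) (Real.sqrt_nonneg 3)]

noncomputable def jointPauli (l : ℝ) (i j k : Bool) : Matrix (Fin 2) (Fin 2) ℂ :=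
  (8⁻¹ : ℂ) • (1 + pauliDot (sgn i * l) (sgn j * l) (sgn k * l))

lemma jointPauli_posSemidef {l : ℝ} (hl0 : 0 ≤ l) (hl : l ≤ 1 / √3) (i j k : Bool) :
    (jointPauli l i j k).PosSemidef := by
  have h3 : 3 * l ^ 2 ≤ 1 := by
    have hls := mul_self_le_mul_self (by positivity) ((le_div_iff₀ (by positivity)).mp hl)
    nlinarith [Real.mul_self_sqrt (show (0 : ℝ) ≤ 3 by norm_num)]
  have hbloch : (sgn i * l) ^ 2 + (sgn j * l) ^ 2 + (sgn k * l) ^ 2 ≤ (1 : ℝ) ^ 2 := by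
    simp only [mul_pow, sgn_sq]
    linarith
  have h := posSemidef_smul_one_add_pauliDot zero_le_one hbloch
  rw [Complex.ofReal_one, one_smul] at h
  exact h.smul (by norm_num [Complex.le_def])

lemma sum_jointPauli (l : ℝ) : ∑ i, ∑ j, ∑ k, jointPauli l i j k = 1 := by
  simp [jointPauli, pauliDot, sgn]
  module

lemma sum_jointPauli_x (l : ℝ) (i : Bool) : ∑ j, ∑ k, jointPauli l i j k = smeared σx l i := by
  cases i <;> simp [jointPauli, pauliDot, smeared, sgn] <;> module

lemma sum_jointPauli_y (l : ℝ) (j : Bool) : ∑ i, ∑ k, jointPauli l i j k = smeared σy l j := by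
  cases j <;> simp [jointPauli, pauliDot, smeared, sgn] <;> module

lemma sum_jointPauli_z (l : ℝ) (k : Bool) : ∑ i, ∑ j, jointPauli l i j k = smeared σz l k := by
  cases k <;> simp [jointPauli, pauliDot, smeared, sgn] <;> module

theorem stmt_4 (l : ℝ) (hl0 : 0 ≤ l) :
    (∃ G : Bool → Bool → Bool → Matrix (Fin 2) (Fin 2) ℂ,
        (∀ i j k, (G i j k).PosSemidef) ∧
        (∑ i : Bool, ∑ j : Bool, ∑ k : Bool, G i j k = 1) ∧
        (∀ i, ∑ j : Bool, ∑ k : Bool, G i j k = smeared σx l i) ∧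
        (∀ j, ∑ i : Bool, ∑ k : Bool, G i j k = smeared σy l j) ∧
        (∀ k, ∑ i : Bool, ∑ j : Bool, G i j k = smeared σz l k)) ↔
      l ≤ 1 / Real.sqrt 3 :=
  ⟨fun ⟨_, hG, hsum, hx, hy, hz⟩ => le_one_div_sqrt_three_of_joint hG hsum hx hy hz,
    fun hl => ⟨jointPauli l, jointPauli_posSemidef hl0 hl, sum_jointPauli l, sum_jointPauli_x l,
      sum_jointPauli_y l, sum_jointPauli_z l⟩⟩
end

section
/- A finite collection of POVMs {A_k} on ℂ^d is jointly measurable if and only if the assemblage obtained by measuring them on Alice's half of the maximally entangled state |φ⁺⟩ = (1/√d)∑_i|ii⟩ admits a hidden state model (i.e., is non-steerable). -/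
open Matrix ComplexOrder Kronecker

/-- Partial trace over the first (Alice's) tensor factor. -/
noncomputable def ptraceA {d : ℕ} (ρ : Matrix (Fin d × Fin d) (Fin d × Fin d) ℂ) :
    Matrix (Fin d) (Fin d) ℂ :=
  Matrix.of fun j j' => ∑ i : Fin d, ρ (i, j) (i, j')

/-- The projector onto the maximally entangled state `|φ⁺⟩ = (1/√d) ∑ i, |ii⟩`. -/
noncomputable def maxEntProj (d : ℕ) : Matrix (Fin d × Fin d) (Fin d × Fin d) ℂ :=
  Matrix.of fun p q => if p.1 = p.2 ∧ q.1 = q.2 then (1 / d : ℂ) else 0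

/-- Joint measurability of a finite collection of POVMs `A k` with outcomes in `X`. -/
def JointlyMeasurable {n : ℕ} {K X : Type*} [Fintype X]
    (A : K → X → Matrix (Fin n) (Fin n) ℂ) : Prop :=
  ∃ (m : ℕ) (G : Fin m → Matrix (Fin n) (Fin n) ℂ) (D : Fin m → K → X → ℝ),
    (∀ lam, (G lam).PosSemidef) ∧ (∑ lam, G lam = 1) ∧
    (∀ lam k x, 0 ≤ D lam k x) ∧ (∀ lam k, ∑ x, D lam k x = 1) ∧
    (∀ k x, A k x = ∑ lam, ((D lam k x : ℝ) : ℂ) • G lam)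

/-- A hidden state model (local hidden state model) for an assemblage. -/
def HiddenStateModel {d : ℕ} {K X : Type*} [Fintype X]
    (ρ : K → X → Matrix (Fin d) (Fin d) ℂ) : Prop :=
  ∃ (m : ℕ) (σ : Fin m → Matrix (Fin d) (Fin d) ℂ) (p : Fin m → K → X → ℝ),
    (∀ lam, (σ lam).PosSemidef) ∧ (∑ lam, (σ lam).trace = 1) ∧
    (∀ lam k x, 0 ≤ p lam k x) ∧ (∀ lam k, ∑ x, p lam k x = 1) ∧
    (∀ k x, ρ k x = ∑ lam, ((p lam k x : ℝ) : ℂ) • σ lam)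

/-!
Measuring `A k` on Alice's half of `|φ⁺⟩` leaves Bob with `ρ_{x|k} = d⁻¹ (A k x)ᵀ`. The map
`B ↦ d⁻¹ Bᵀ` is linear and preserves positivity, so it carries a parent POVM `G` of a joint
measurement to hidden states `d⁻¹ (G λ)ᵀ`, the normalisation `∑ G = 1` becoming `∑ tr σ = 1`.
Conversely, hidden states `σ` reproducing the assemblage sum to Bob's reduced state
`∑ₓ ρ_{x|k} = d⁻¹ 1`, so `G λ = d (σ λ)ᵀ` is a POVM, and it is a parent of the `A k`.
-/

lemma ptraceA_kronecker_one_mul_maxEntProj {d : ℕ} (B : Matrix (Fin d) (Fin d) ℂ) :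
    ptraceA ((B ⊗ₖ (1 : Matrix (Fin d) (Fin d) ℂ)) * maxEntProj d) = (d : ℂ)⁻¹ • Bᵀ := by
  ext j j'
  simp [ptraceA, maxEntProj, Matrix.mul_apply, Matrix.kroneckerMap_apply,
    Fintype.sum_prod_type, Matrix.one_apply, ite_and, mul_comm]

lemma smul_transpose_sum_smul {ι m n : Type*} [Fintype ι] (a : ℂ) (c : ι → ℂ)
    (σ : ι → Matrix m n ℂ) : a • (∑ i, c i • σ i)ᵀ = ∑ i, c i • a • (σ i)ᵀ := by
  simp only [transpose_sum, transpose_smul, Finset.smul_sum, smul_comm a]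

lemma sum_sum_ofReal_smul_of_sum_eq_one {ι X M : Type*} [Fintype ι] [Fintype X]
    [AddCommMonoid M] [Module ℂ M] (p : ι → X → ℝ) (σ : ι → M)
    (hp : ∀ i, ∑ x, p i x = 1) : ∑ x, ∑ i, ((p i x : ℝ) : ℂ) • σ i = ∑ i, σ i := by
  rw [Finset.sum_comm]
  refine Finset.sum_congr rfl fun i _ => ?_
  rw [← Finset.sum_smul, ← Complex.ofReal_sum, hp i, Complex.ofReal_one, one_smul]

lemma jointlyMeasurable_of_isEmpty {n : ℕ} {K X : Type*} [IsEmpty K] [Fintype X]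
    (A : K → X → Matrix (Fin n) (Fin n) ℂ) : JointlyMeasurable A :=
  ⟨1, fun _ => 1, fun _ _ _ => 0, fun _ => PosSemidef.one, by simp, fun _ k => isEmptyElim k,
    fun _ k => isEmptyElim k, fun k => isEmptyElim k⟩

section

variable {d : ℕ} {K X : Type*} [Fintype X] (A : K → X → Matrix (Fin d) (Fin d) ℂ)

lemma JointlyMeasurable.hiddenStateModel_smul_transpose (hd : 0 < d) (hA : JointlyMeasurable A) :
    HiddenStateModel (fun k x => (d : ℂ)⁻¹ • (A k x)ᵀ) := by
  obtain ⟨m, G, D, hG, hGsum, hD, hDsum, hAG⟩ := hA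
  refine ⟨m, fun i => (d : ℂ)⁻¹ • (G i)ᵀ, D, fun i => (hG i).transpose.smul (by positivity),
    ?_, hD, hDsum, fun k x => by beta_reduce; rw [hAG, smul_transpose_sum_smul]⟩
  have hdC : (d : ℂ) ≠ 0 := Nat.cast_ne_zero.mpr hd.ne'
  calc ∑ i, ((d : ℂ)⁻¹ • (G i)ᵀ).trace = (d : ℂ)⁻¹ * (∑ i, G i).trace := by
        simp only [trace_smul, trace_transpose, trace_sum, smul_eq_mul, Finset.mul_sum]
    _ = 1 := by rw [hGsum, trace_one, Fintype.card_fin, inv_mul_cancel₀ hdC]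

lemma HiddenStateModel.jointlyMeasurable_of_smul_transpose [Nonempty K] (hd : 0 < d)
    (hsum : ∀ k, ∑ x, A k x = 1) (hρ : HiddenStateModel (fun k x => (d : ℂ)⁻¹ • (A k x)ᵀ)) :
    JointlyMeasurable A := by
  obtain ⟨m, σ, p, hσ, -, hp, hpsum, hρσ⟩ := hρ
  beta_reduce at hρσ
  have hdC : (d : ℂ) ≠ 0 := Nat.cast_ne_zero.mpr hd.ne'
  have hσsum : ∑ i, σ i = (d : ℂ)⁻¹ • 1 := by
    obtain ⟨k⟩ := ‹Nonempty K›
    rw [← sum_sum_ofReal_smul_of_sum_eq_one (fun i x => p i k x) σ (hpsum · k),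
      ← Finset.sum_congr rfl fun x _ => hρσ k x, ← Finset.smul_sum, ← transpose_sum, hsum k,
      transpose_one]
  refine ⟨m, fun i => (d : ℂ) • (σ i)ᵀ, p, fun i => (hσ i).transpose.smul (by positivity),
    ?_, hp, hpsum, fun k x => ?_⟩
  · rw [← Finset.smul_sum, ← transpose_sum, hσsum, transpose_smul, transpose_one, smul_smul,
      mul_inv_cancel₀ hdC, one_smul]
  · calc A k x = (d : ℂ) • ((d : ℂ)⁻¹ • (A k x)ᵀ)ᵀ := by
          rw [transpose_smul, transpose_transpose, smul_smul, mul_inv_cancel₀ hdC, one_smul]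
      _ = _ := by rw [hρσ k x, smul_transpose_sum_smul]

end

theorem stmt_8_general {d : ℕ} (hd : 0 < d) {K X : Type*} [Fintype X]
    (A : K → X → Matrix (Fin d) (Fin d) ℂ)
    (hsum : ∀ k, ∑ x, A k x = 1) :
    JointlyMeasurable A ↔
      HiddenStateModel (fun k x =>
        ptraceA ((A k x ⊗ₖ (1 : Matrix (Fin d) (Fin d) ℂ)) * maxEntProj d)) := by
  simp only [ptraceA_kronecker_one_mul_maxEntProj]
  refine ⟨(·.hiddenStateModel_smul_transpose A hd), fun hρ => ?_⟩
  cases isEmpty_or_nonempty K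
  · exact jointlyMeasurable_of_isEmpty A
  · exact hρ.jointlyMeasurable_of_smul_transpose A hd hsum

theorem stmt_8 {d : ℕ} (hd : 0 < d) {K X : Type*} [Fintype K] [Fintype X]
    (A : K → X → Matrix (Fin d) (Fin d) ℂ)
    (hpos : ∀ k x, (A k x).PosSemidef) (hsum : ∀ k, ∑ x, A k x = 1) :
    JointlyMeasurable A ↔
      HiddenStateModel (fun k x =>
        ptraceA ((A k x ⊗ₖ (1 : Matrix (Fin d) (Fin d) ℂ)) * maxEntProj d)) :=
  stmt_8_general hd A hsum
end

section
/- If a state ρ_AB admits a hidden state model (is unsteerable) for all POVM measurements of Alice, then for any λ ∈ [0,1] the noisy state ρ_AB^λ = λρ_AB + ((1−λ)/d) I ⊗ Tr_A[ρ_AB] is also unsteerable for all POVM measurements of Alice. -/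
open Matrix ComplexOrder Kronecker

/-- Unsteerability of a bipartite state for all (finite collections of) POVMs of Alice. -/
def UnsteerableAllPOVM {d : ℕ} (ρAB : Matrix (Fin d × Fin d) (Fin d × Fin d) ℂ) : Prop :=
  ∀ (nK nX : ℕ) (A : Fin nK → Fin nX → Matrix (Fin d) (Fin d) ℂ),
    (∀ k x, (A k x).PosSemidef) → (∀ k, ∑ x, A k x = 1) →
    HiddenStateModel (fun k x =>
      ptraceA ((A k x ⊗ₖ (1 : Matrix (Fin d) (Fin d) ℂ)) * ρAB))

/-! Depolarizing noise on Bob's side of the state is the same as depolarizing noise on Alice's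
measurements: `Tr_A[(A ⊗ I) ρ^λ] = Tr_A[(A^λ ⊗ I) ρ]`. Since `A ↦ A^λ` maps POVMs to POVMs, every
assemblage of `ρ^λ` is an assemblage of `ρ`, and so inherits its hidden state model. -/

section Depolarize

variable {n : Type*} [Fintype n] [DecidableEq n]

/-- `A^λ` in the notation above, with `l` for `λ`. -/
noncomputable def depolarize (l : ℝ) (A : Matrix n n ℂ) : Matrix n n ℂ :=
  (l : ℂ) • A + ((((1 - l : ℝ) : ℂ) / Fintype.card n) * A.trace) • 1

lemma Matrix.PosSemidef.depolarize {l : ℝ} (hl0 : 0 ≤ l) (hl1 : l ≤ 1) {A : Matrix n n ℂ}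
    (hA : A.PosSemidef) : (depolarize l A).PosSemidef := by
  have hcoef : (0 : ℂ) ≤ ((1 - l : ℝ) : ℂ) / Fintype.card n :=
    div_nonneg (Complex.zero_le_real.2 (sub_nonneg.2 hl1)) (Nat.cast_nonneg _)
  exact (hA.smul (Complex.zero_le_real.2 hl0)).add
    (PosSemidef.one.smul (mul_nonneg hcoef hA.trace_nonneg))

lemma sum_depolarize [Nonempty n] {X : Type*} [Fintype X] {A : X → Matrix n n ℂ}
    (hA : ∑ x, A x = 1) (l : ℝ) : ∑ x, depolarize l (A x) = 1 := by
  have hcard : (Fintype.card n : ℂ) ≠ 0 := Nat.cast_ne_zero.2 Fintype.card_ne_zero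
  calc ∑ x, depolarize l (A x)
      = (l : ℂ) • ∑ x, A x + (((1 - l : ℝ) : ℂ) / Fintype.card n * (∑ x, A x).trace) • 1 := by
        simp only [depolarize, Finset.sum_add_distrib, Finset.smul_sum, trace_sum,
          Finset.mul_sum, Finset.sum_smul]
    _ = 1 := by
        rw [hA, trace_one, div_mul_cancel₀ _ hcard, ← add_smul, smul_one_eq_diagonal]
        push_cast
        simp

end Depolarize

section PartialTrace

variable {d : ℕ}

lemma ptraceA_add (A B : Matrix (Fin d × Fin d) (Fin d × Fin d) ℂ) :
    ptraceA (A + B) = ptraceA A + ptraceA B := by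
  ext j j'
  simp [ptraceA, Finset.sum_add_distrib]

lemma ptraceA_smul (c : ℂ) (A : Matrix (Fin d × Fin d) (Fin d × Fin d) ℂ) :
    ptraceA (c • A) = c • ptraceA A := by
  ext j j'
  simp [ptraceA, Finset.mul_sum]

lemma ptraceA_kronecker (A B : Matrix (Fin d) (Fin d) ℂ) :
    ptraceA (A ⊗ₖ B) = A.trace • B := by
  ext j j'
  simp [ptraceA, trace, kroneckerMap_apply, Finset.sum_mul]

lemma ptraceA_kronecker_one_mul_noisy_eq_depolarize (l : ℝ) (A : Matrix (Fin d) (Fin d) ℂ)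
    (ρ : Matrix (Fin d × Fin d) (Fin d × Fin d) ℂ) :
    ptraceA ((A ⊗ₖ (1 : Matrix (Fin d) (Fin d) ℂ)) *
        ((l : ℂ) • ρ + (((1 - l : ℝ) : ℂ) / d) • ((1 : Matrix (Fin d) (Fin d) ℂ) ⊗ₖ ptraceA ρ))) =
      ptraceA ((depolarize l A ⊗ₖ (1 : Matrix (Fin d) (Fin d) ℂ)) * ρ) := by
  rw [Matrix.mul_add, Matrix.mul_smul, Matrix.mul_smul, ← mul_kronecker_mul, Matrix.mul_one,
    Matrix.one_mul, depolarize, Fintype.card_fin, add_kronecker, smul_kronecker, smul_kronecker,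
    one_kronecker_one, Matrix.add_mul, Matrix.smul_mul, Matrix.smul_mul, Matrix.one_mul]
  simp only [ptraceA_add, ptraceA_smul, ptraceA_kronecker, smul_smul]

end PartialTrace

lemma UnsteerableAllPOVM.of_ptraceA_kronecker_one_mul_eq {d : ℕ}
    {ρ σ : Matrix (Fin d × Fin d) (Fin d × Fin d) ℂ} (hρ : UnsteerableAllPOVM ρ)
    (f : Matrix (Fin d) (Fin d) ℂ → Matrix (Fin d) (Fin d) ℂ)
    (hf_psd : ∀ A, A.PosSemidef → (f A).PosSemidef)
    (hf_sum : ∀ (nX : ℕ) (A : Fin nX → Matrix (Fin d) (Fin d) ℂ), ∑ x, A x = 1 →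
      ∑ x, f (A x) = 1)
    (hf : ∀ A, ptraceA ((A ⊗ₖ (1 : Matrix (Fin d) (Fin d) ℂ)) * σ) =
      ptraceA ((f A ⊗ₖ (1 : Matrix (Fin d) (Fin d) ℂ)) * ρ)) :
    UnsteerableAllPOVM σ := by
  unfold UnsteerableAllPOVM
  intro nK nX A hA_psd hA_sum
  simp only [hf]
  exact hρ nK nX (fun k x => f (A k x)) (fun k x => hf_psd _ (hA_psd k x))
    (fun k => hf_sum nX (A k) (hA_sum k))

theorem stmt_18_general {d : ℕ} (hd : 0 < d)
    (ρAB : Matrix (Fin d × Fin d) (Fin d × Fin d) ℂ)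
    (hunst : UnsteerableAllPOVM ρAB)
    (l : ℝ) (hl0 : 0 ≤ l) (hl1 : l ≤ 1) :
    UnsteerableAllPOVM
      (((l : ℂ)) • ρAB + (((1 - l : ℝ) : ℂ) / d) •
        ((1 : Matrix (Fin d) (Fin d) ℂ) ⊗ₖ ptraceA ρAB)) := by
  have : Nonempty (Fin d) := ⟨⟨0, hd⟩⟩
  exact hunst.of_ptraceA_kronecker_one_mul_eq (depolarize l)
    (fun _ hA => hA.depolarize hl0 hl1) (fun _ _ hA => sum_depolarize hA l)
    (fun A => ptraceA_kronecker_one_mul_noisy_eq_depolarize l A ρAB)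

theorem stmt_18 {d : ℕ} (hd : 0 < d)
    (ρAB : Matrix (Fin d × Fin d) (Fin d × Fin d) ℂ)
    (hρ : ρAB.PosSemidef) (hρtr : ρAB.trace = 1)
    (hunst : UnsteerableAllPOVM ρAB)
    (l : ℝ) (hl0 : 0 ≤ l) (hl1 : l ≤ 1) :
    UnsteerableAllPOVM
      (((l : ℂ)) • ρAB + (((1 - l : ℝ) : ℂ) / d) •
        ((1 : Matrix (Fin d) (Fin d) ℂ) ⊗ₖ ptraceA ρAB)) :=
  stmt_18_general hd ρAB hunst l hl0 hl1
end
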